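/- A finite simple connected loopless graph G is resistance nonnegative (RN) if and only if there exists a probability distribution μ on the set of spanning trees of G with μ(T) > 0 for every spanning tree T, such that for every vertex v ∈ V the expected degree of v in a random spanning tree under μ is at most 2, i.e. ∑_T μ(T) · deg_T(v) ≤ 2, where deg_T(v) is the number of edges of T incident to v. -/

import Mathlib

open scoped Classical

set_option linter.unusedSectionVars false
set_option maxHeartbeats 1000000

namespace RCurv

variable {V : Type*} [Fintype V] [DecidableEq V]

/-- `T` is (the edge set of) a spanning tree of `G`. -/
def IsSpanningTree (G : SimpleGraph V) (T : Finset (Sym2 V)) : Prop :=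
  (T : Set (Sym2 V)) ⊆ G.edgeSet ∧ (SimpleGraph.fromEdgeSet (T : Set (Sym2 V))).IsTree

/-- The finite set of all spanning trees of `G`. -/
noncomputable def spanningTrees (G : SimpleGraph V) : Finset (Finset (Sym2 V)) :=
  Finset.univ.filter fun T => IsSpanningTree G T

/-- The relative resistance `r_e(c)` of an edge `e`. -/
noncomputable def relRes (G : SimpleGraph V) (c : Sym2 V → ℝ) (e : Sym2 V) : ℝ :=
  (∑ T ∈ (spanningTrees G).filter (fun T => e ∈ T), ∏ t ∈ T, c t) /
    (∑ T ∈ spanningTrees G, ∏ t ∈ T, c t)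

/-- The resistance curvature `p_v(c)` of a vertex `v`. -/
noncomputable def curv (G : SimpleGraph V) (c : Sym2 V → ℝ) (v : V) : ℝ :=
  1 - (1 / 2) * ∑ u ∈ G.neighborFinset v, relRes G c s(u, v)

/-- `G` is resistance nonnegative. -/
def IsRN (G : SimpleGraph V) : Prop :=
  ∃ c : Sym2 V → ℝ, (∀ e ∈ G.edgeSet, 0 < c e) ∧ ∀ v : V, 0 ≤ curv G c v

/-- `G` is resistance positive. -/
def IsRP (G : SimpleGraph V) : Prop :=
  ∃ c : Sym2 V → ℝ, (∀ e ∈ G.edgeSet, 0 < c e) ∧ ∀ v : V, 0 < curv G c v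

/-- The indicator vector of a finite edge set, as a vector in `ℝ^{Sym2 V}`. -/
noncomputable def indVec (T : Finset (Sym2 V)) : Sym2 V → ℝ := fun e => if e ∈ T then 1 else 0

/-- The spanning tree polytope `P(G)`. -/
noncomputable def stPolytope (G : SimpleGraph V) : Set (Sym2 V → ℝ) :=
  convexHull ℝ {x | ∃ T ∈ spanningTrees G, x = indVec T}

/-- `M` is a matching of `G`. -/
def IsMatching' (G : SimpleGraph V) (M : Finset (Sym2 V)) : Prop :=
  (M : Set (Sym2 V)) ⊆ G.edgeSet ∧ ∀ v : V, (M.filter fun e => v ∈ e).card ≤ 1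

/-- The matching polytope `M(G)`. -/
noncomputable def matchingPolytope (G : SimpleGraph V) : Set (Sym2 V → ℝ) :=
  convexHull ℝ {x | ∃ M : Finset (Sym2 V), IsMatching' G M ∧ x = indVec M}

/-- A Hamiltonian path: a spanning tree in which every vertex has degree at most `2`. -/
def IsHamPath (G : SimpleGraph V) (H : Finset (Sym2 V)) : Prop :=
  IsSpanningTree G H ∧ ∀ v : V, (H.filter fun e => v ∈ e).card ≤ 2

/-! ### Auxiliary lemmas -/

open SimpleGraph in
/-- Every connected graph has a spanning tree (in the `Finset`-of-edges sense). -/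
lemma spanningTrees_nonempty (G : SimpleGraph V) (hG : G.Connected) :
    (spanningTrees G).Nonempty := by
  set A : Finset (Finset (Sym2 V)) :=
    Finset.univ.filter
      (fun T : Finset (Sym2 V) =>
        (T : Set (Sym2 V)) ⊆ G.edgeSet ∧ (fromEdgeSet (T : Set (Sym2 V))).Connected) with hAdef
  have hA : A.Nonempty := by
    refine ⟨(G.edgeSet.toFinite).toFinset, ?_⟩
    rw [hAdef, Finset.mem_filter]
    refine ⟨Finset.mem_univ _, ?_⟩
    rw [Set.Finite.coe_toFinset, fromEdgeSet_edgeSet]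
    exact ⟨subset_rfl, hG⟩
  obtain ⟨T, hTA, hmin⟩ := Finset.exists_min_image A Finset.card hA
  rw [hAdef, Finset.mem_filter] at hTA
  obtain ⟨-, hsub, hconn⟩ := hTA
  have hacyclic : (fromEdgeSet (T : Set (Sym2 V))).IsAcyclic := by
    rw [isAcyclic_iff_forall_adj_isBridge]
    intro a b hab
    by_contra hnb
    have heT : s(a, b) ∈ T := ((fromEdgeSet_adj _).mp hab).1
    have hne : a ≠ b := ((fromEdgeSet_adj _).mp hab).2
    -- the deleted graph equals `fromEdgeSet` of the erased finset
    have Hdel : fromEdgeSet (T : Set (Sym2 V)) \ fromEdgeSet {s(a, b)}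
        = fromEdgeSet ((T.erase s(a, b) : Finset (Sym2 V)) : Set (Sym2 V)) := by
      ext x y
      simp only [sdiff_adj, fromEdgeSet_adj, Finset.coe_erase, Set.mem_diff,
        Set.mem_singleton_iff, Finset.mem_coe]
      tauto
    have hreach : (fromEdgeSet ((T.erase s(a, b) : Finset (Sym2 V)) : Set (Sym2 V))).Reachable a b := by
      rw [← Hdel]
      rw [isBridge_iff] at hnb
      push_neg at hnb
      exact hnb
    -- deleting a non-bridge edge keeps connectivity
    have hclaim : ∀ x y : V, (fromEdgeSet (T : Set (Sym2 V))).Reachable x y →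
        (fromEdgeSet ((T.erase s(a, b) : Finset (Sym2 V)) : Set (Sym2 V))).Reachable x y := by
      intro x y hxy
      obtain ⟨p⟩ := hxy
      induction p with
      | nil => exact Reachable.refl _
      | cons h q ih =>
        rename_i u v' w
        have hq : (fromEdgeSet ((T.erase s(a, b) : Finset (Sym2 V)) : Set (Sym2 V))).Reachable v' w := ih
        have hT' : s(u, v') ∈ T := ((fromEdgeSet_adj _).mp h).1
        have hne' : u ≠ v' := ((fromEdgeSet_adj _).mp h).2
        by_cases he : s(u, v') = s(a, b)
        · rw [Sym2.eq_iff] at he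
          rcases he with ⟨rfl, rfl⟩ | ⟨rfl, rfl⟩
          · exact hreach.trans hq
          · exact hreach.symm.trans hq
        · refine (Adj.reachable ?_).trans hq
          rw [fromEdgeSet_adj]
          exact ⟨Finset.mem_coe.mpr (Finset.mem_erase.mpr ⟨he, hT'⟩), hne'⟩
    have hconn' : (fromEdgeSet ((T.erase s(a, b) : Finset (Sym2 V)) : Set (Sym2 V))).Connected := by
      rw [connected_iff]
      exact ⟨fun x y => hclaim x y (hconn.preconnected x y), hconn.nonempty⟩
    have hmem : T.erase s(a, b) ∈ A := by
      rw [hAdef, Finset.mem_filter]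
      refine ⟨Finset.mem_univ _, ?_, hconn'⟩
      exact fun e he => hsub (Finset.mem_coe.mpr (Finset.mem_of_mem_erase (Finset.mem_coe.mp he)))
    have := hmin _ hmem
    rw [Finset.card_erase_of_mem heT] at this
    have hpos : 0 < T.card := Finset.card_pos.mpr ⟨_, heT⟩
    omega
  refine ⟨T, ?_⟩
  rw [spanningTrees, Finset.mem_filter]
  exact ⟨Finset.mem_univ _, hsub, ⟨hconn, hacyclic⟩⟩

/-- The degree of `v` in `T` counted via neighbors of `v` in `G`. -/
lemma deg_eq (G : SimpleGraph V) {T : Finset (Sym2 V)} (hT : T ∈ spanningTrees G) (v : V) :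
    ((T.filter fun e => v ∈ e).card : ℝ)
      = ∑ u ∈ G.neighborFinset v, (if s(u, v) ∈ T then (1 : ℝ) else 0) := by
  have hsub : (T : Set (Sym2 V)) ⊆ G.edgeSet := by
    rw [spanningTrees, Finset.mem_filter] at hT
    exact hT.2.1
  rw [Finset.sum_boole]
  congr 1
  refine (Finset.card_bij (fun u _ => s(u, v)) ?_ ?_ ?_).symm
  · intro u hu
    rw [Finset.mem_filter] at hu ⊢
    exact ⟨hu.2, Sym2.mem_mk_right u v⟩
  · intro u hu u' hu' he
    exact Sym2.congr_left.mp he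
  · intro e he
    rw [Finset.mem_filter] at he
    obtain ⟨heT, hv⟩ := he
    have heE : e ∈ G.edgeSet := hsub heT
    have h2 : s(v, Sym2.Mem.other hv) = e := Sym2.other_spec hv
    have hswap : s(Sym2.Mem.other hv, v) = e := by rw [Sym2.eq_swap]; exact h2
    refine ⟨Sym2.Mem.other hv, ?_, hswap⟩
    rw [Finset.mem_filter, SimpleGraph.mem_neighborFinset]
    constructor
    · rw [← SimpleGraph.mem_edgeSet, h2]
      exact heE
    · rw [hswap]
      exact heT

/-- Exchanging the summation over trees and over neighbors. -/
lemma sum_deg_eq (G : SimpleGraph V) (w : Finset (Sym2 V) → ℝ) (v : V) :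
    ∑ T ∈ spanningTrees G, w T * ((T.filter fun e => v ∈ e).card : ℝ)
      = ∑ u ∈ G.neighborFinset v,
          ∑ T ∈ (spanningTrees G).filter (fun T => s(u, v) ∈ T), w T := by
  have h1 : ∀ u : V, ∑ T ∈ (spanningTrees G).filter (fun T => s(u, v) ∈ T), w T
      = ∑ T ∈ spanningTrees G, (if s(u, v) ∈ T then w T else 0) := by
    intro u; rw [Finset.sum_filter]
  simp_rw [h1]
  rw [Finset.sum_comm]
  refine Finset.sum_congr rfl fun T hT => ?_
  rw [deg_eq G hT v, Finset.mul_sum]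
  refine Finset.sum_congr rfl fun u _ => ?_
  by_cases h : s(u, v) ∈ T <;> simp [h]

section MeanMap


variable {E : Type*} [Fintype E] [DecidableEq E]

private noncomputable def ell (T : Finset E) (θ : E → ℝ) : ℝ := ∑ t ∈ T, θ t

private lemma ell_add_smul (T : Finset E) (θ d : E → ℝ) (t : ℝ) :
    ell T (θ + t • d) = ell T θ + t * ell T d := by
  simp only [ell, Pi.add_apply, Pi.smul_apply, smul_eq_mul, Finset.sum_add_distrib,
    Finset.mul_sum]

private lemma ell_smul (T : Finset E) (c : ℝ) (θ : E → ℝ) : ell T (c • θ) = c * ell T θ := by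
  simp only [ell, Pi.smul_apply, smul_eq_mul, Finset.mul_sum]

private lemma ell_continuous (T : Finset E) : Continuous (ell T) :=
  continuous_finset_sum _ fun t _ => continuous_apply t

private noncomputable def iv (T : Finset E) : E → ℝ := fun e => if e ∈ T then 1 else 0

private lemma dot_iv (θ : E → ℝ) (T : Finset E) :
    ∑ e : E, θ e * iv T e = ell T θ := by
  simp only [iv, mul_ite, mul_one, mul_zero]
  rw [Finset.sum_ite_mem, Finset.univ_inter, ell]

/-- Key analytic lemma: marginals of exponential-family measures on a finite family of
finite sets realize any strictly positive mixture's marginal vector. -/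
lemma exists_good_weights (S : Finset (Finset E)) (μ : Finset E → ℝ)
    (hpos : ∀ T ∈ S, 0 < μ T) (hsum : ∑ T ∈ S, μ T = 1) :
    ∃ θ : E → ℝ, ∀ e : E,
      ∑ T ∈ S.filter (fun T => e ∈ T), Real.exp (∑ t ∈ T, θ t)
        = (∑ T ∈ S, Real.exp (∑ t ∈ T, θ t)) * ∑ T ∈ S, μ T * (if e ∈ T then 1 else 0) := by
  have hS : S.Nonempty := by
    rcases Finset.eq_empty_or_nonempty S with h | h
    · rw [h, Finset.sum_empty] at hsum; norm_num at hsum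
    · exact h
  obtain ⟨T₀, hT₀⟩ := hS
  set Z : (E → ℝ) → ℝ := fun θ => ∑ T ∈ S, Real.exp (ell T θ) with hZdef
  set L : (E → ℝ) → ℝ := fun θ => ∑ T ∈ S, μ T * ell T θ with hLdef
  set f : (E → ℝ) → ℝ := fun θ => Real.log (Z θ) - L θ with hfdef
  have hZpos : ∀ θ, 0 < Z θ :=
    fun θ => Finset.sum_pos (fun T _ => Real.exp_pos _) ⟨T₀, hT₀⟩
  have hZcont : Continuous Z :=
    continuous_finset_sum _ fun T _ => (Real.continuous_exp).comp (ell_continuous T)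
  have hLcont : Continuous L :=
    continuous_finset_sum _ fun T _ => continuous_const.mul (ell_continuous T)
  have hfcont : Continuous f :=
    ((hZcont.log fun θ => (hZpos θ).ne').sub hLcont)
  -- lower bounds on f
  have hfge : ∀ (θ : E → ℝ) (T), T ∈ S → ell T θ - L θ ≤ f θ := by
    intro θ T hT
    have h1 : Real.exp (ell T θ) ≤ Z θ :=
      Finset.single_le_sum (fun T' _ => (Real.exp_pos (ell T' θ)).le) hT
    have h2 : ell T θ ≤ Real.log (Z θ) := (Real.le_log_iff_exp_le (hZpos θ)).mpr h1
    simp only [hfdef]; linarith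
  have hf0 : ∀ θ, 0 ≤ f θ := by
    intro θ
    by_contra hcon
    push_neg at hcon
    have hlt0 : ∀ T ∈ S, ell T θ - L θ < 0 := fun T hT => lt_of_le_of_lt (hfge θ T hT) hcon
    have hlt : ∑ T ∈ S, μ T * ell T θ < ∑ T ∈ S, μ T * L θ := by
      refine Finset.sum_lt_sum_of_nonempty ⟨T₀, hT₀⟩ fun T hT => ?_
      have h1 := hlt0 T hT
      have h2 := hpos T hT
      nlinarith
    rw [← Finset.sum_mul, hsum, one_mul] at hlt
    rw [hLdef] at hlt
    exact lt_irrefl _ hlt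
  set g : (E → ℝ) → ℝ := fun θ => ∑ T ∈ S, max (ell T θ - L θ) 0 with hgdef
  have hgcont : Continuous g :=
    continuous_finset_sum _ fun T _ =>
      ((ell_continuous T).sub hLcont).max continuous_const
  have hfg : ∀ θ, g θ ≤ (S.card : ℝ) * f θ := by
    intro θ
    have hterm : ∀ T ∈ S, max (ell T θ - L θ) 0 ≤ f θ := fun T hT =>
      max_le (hfge θ T hT) (hf0 θ)
    calc g θ ≤ ∑ _T ∈ S, f θ := Finset.sum_le_sum hterm
      _ = (S.card : ℝ) * f θ := by rw [Finset.sum_const, nsmul_eq_mul]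
  -- the subspace spanned by differences of indicator vectors
  set W : Submodule ℝ (E → ℝ) :=
    Submodule.span ℝ ((fun T => iv T - iv T₀) '' (S : Set (Finset E))) with hWdef
  have hdotW : ∀ θ : E → ℝ, (∀ T ∈ S, ell T θ = ell T₀ θ) →
      ∀ w ∈ W, ∑ e : E, θ e * w e = 0 := by
    intro θ hall w hw
    induction hw using Submodule.span_induction with
    | mem y hy =>
      obtain ⟨T, hT, rfl⟩ := hy
      have h1 : ∑ e : E, θ e * (iv T - iv T₀) e
          = (∑ e : E, θ e * iv T e) - ∑ e : E, θ e * iv T₀ e := by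
        rw [← Finset.sum_sub_distrib]
        exact Finset.sum_congr rfl fun e _ => by
          simp [Pi.sub_apply, mul_sub]
      rw [h1, dot_iv θ T, dot_iv θ T₀, hall T hT, sub_self]
    | zero => simp
    | add y z _ _ hy hz =>
      have h1 : (∑ e : E, θ e * (y + z) e)
          = (∑ e : E, θ e * y e) + ∑ e : E, θ e * z e := by
        rw [← Finset.sum_add_distrib]
        exact Finset.sum_congr rfl fun e _ => by simp [mul_add]
      rw [h1, hy, hz, add_zero]
    | smul c y _ hy =>
      have h1 : (∑ e : E, θ e * (c • y) e) = c * ∑ e : E, θ e * y e := by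
        rw [Finset.mul_sum]
        exact Finset.sum_congr rfl fun e _ => by
          simp only [Pi.smul_apply, smul_eq_mul]; ring
      rw [h1, hy, mul_zero]
  have hgpos : ∀ θ : E → ℝ, θ ∈ W → θ ≠ 0 → 0 < g θ := by
    intro θ hθW hθne
    rcases lt_or_ge 0 (g θ) with h | h
    · exact h
    exfalso
    have hterm : ∀ T ∈ S, (0:ℝ) ≤ max (ell T θ - L θ) 0 := fun T _ => le_max_right _ _
    have hg0 : g θ = 0 := le_antisymm h (Finset.sum_nonneg hterm)
    have hmax0 : ∀ T ∈ S, max (ell T θ - L θ) 0 = 0 :=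
      (Finset.sum_eq_zero_iff_of_nonneg hterm).mp hg0
    have hle : ∀ T ∈ S, ell T θ ≤ L θ := by
      intro T hT
      have h1 := hmax0 T hT
      have h2 : ell T θ - L θ ≤ 0 := by
        by_contra hcon
        push_neg at hcon
        rw [max_eq_left hcon.le] at h1
        linarith
      linarith
    have hsum0 : ∑ T ∈ S, μ T * (L θ - ell T θ) = 0 := by
      simp only [mul_sub]
      rw [Finset.sum_sub_distrib, ← Finset.sum_mul, hsum, one_mul, hLdef]
      ring
    have heq : ∀ T ∈ S, ell T θ = L θ := by
      intro T hT
      have h1 := (Finset.sum_eq_zero_iff_of_nonneg fun T' hT' =>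
        mul_nonneg (hpos T' hT').le (sub_nonneg.mpr (hle T' hT'))).mp hsum0 T hT
      have h2 : L θ - ell T θ = 0 := by
        rcases mul_eq_zero.mp h1 with h | h
        · exact absurd h (hpos T hT).ne'
        · exact h
      linarith
    have hall : ∀ T ∈ S, ell T θ = ell T₀ θ := fun T hT => by
      rw [heq T hT, heq T₀ hT₀]
    have hdot := hdotW θ hall θ hθW
    have hz0 : ∀ e : E, θ e = 0 := by
      intro e
      have hnn : ∀ e' : E, e' ∈ Finset.univ → (0:ℝ) ≤ θ e' * θ e' :=
        fun e' _ => mul_self_nonneg _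
      exact mul_self_eq_zero.mp
        ((Finset.sum_eq_zero_iff_of_nonneg hnn).mp hdot e (Finset.mem_univ e))
    exact hθne (funext hz0)
  -- existence of a global minimizer of f on W
  have hmin : ∃ θs ∈ W, ∀ θ ∈ W, f θs ≤ f θ := by
    by_cases hW : ∀ w ∈ W, w = (0 : E → ℝ)
    · refine ⟨0, W.zero_mem, fun θ hθ => ?_⟩
      rw [hW θ hθ]
    · push_neg at hW
      obtain ⟨w₀, hw₀W, hw₀ne⟩ := hW
      set K : Set (E → ℝ) := (W : Set (E → ℝ)) ∩ Metric.sphere 0 1 with hKdef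
      have hKcompact : IsCompact K :=
        Metric.isCompact_of_isClosed_isBounded
          (W.closed_of_finiteDimensional.inter Metric.isClosed_sphere)
          (Metric.isBounded_sphere.subset Set.inter_subset_right)
      have hKne : K.Nonempty := by
        refine ⟨‖w₀‖⁻¹ • w₀, W.smul_mem _ hw₀W, ?_⟩
        rw [Metric.mem_sphere, dist_zero_right, norm_smul, norm_inv, norm_norm,
          inv_mul_cancel₀ (norm_ne_zero_iff.mpr hw₀ne)]
      obtain ⟨θ₁, hθ₁K, hθ₁min⟩ := hKcompact.exists_isMinOn hKne hgcont.continuousOn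
      have hθ₁ne : θ₁ ≠ 0 := by
        intro h
        have h2 := hθ₁K.2
        rw [h, Metric.mem_sphere, dist_self] at h2
        norm_num at h2
      have hδpos : 0 < g θ₁ := hgpos θ₁ hθ₁K.1 hθ₁ne
      set δ : ℝ := g θ₁ with hδdef
      have hghom : ∀ (c : ℝ), 0 ≤ c → ∀ θ, g (c • θ) = c * g θ := by
        intro c hc θ
        rw [hgdef, Finset.mul_sum]
        refine Finset.sum_congr rfl fun T _ => ?_
        have hL : L (c • θ) = c * L θ := by
          rw [hLdef, Finset.mul_sum]
          exact Finset.sum_congr rfl fun T' _ => by rw [ell_smul]; ring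
        rw [ell_smul, hL]
        rcases le_total (ell T θ - L θ) 0 with h | h
        · rw [max_eq_right h, mul_zero, max_eq_right]
          nlinarith
        · rw [max_eq_left h, max_eq_left]
          · ring
          · nlinarith
      have hglb : ∀ θ ∈ W, δ * ‖θ‖ ≤ g θ := by
        intro θ hθ
        rcases eq_or_ne θ 0 with rfl | hne
        · simp only [norm_zero, mul_zero]
          have hg00 : g 0 = 0 := by
            have := hghom 0 le_rfl 0
            simpa using this
          rw [hg00]
        · have hu : (‖θ‖⁻¹ • θ) ∈ K := by
            refine ⟨W.smul_mem _ hθ, ?_⟩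
            rw [Metric.mem_sphere, dist_zero_right, norm_smul, norm_inv, norm_norm,
              inv_mul_cancel₀ (norm_ne_zero_iff.mpr hne)]
          have h1 : δ ≤ g (‖θ‖⁻¹ • θ) := isMinOn_iff.mp hθ₁min _ hu
          have h2 : g θ = ‖θ‖ * g (‖θ‖⁻¹ • θ) := by
            have h3 : (‖θ‖ : ℝ) • (‖θ‖⁻¹ • θ) = θ := by
              rw [smul_smul, mul_inv_cancel₀ (norm_ne_zero_iff.mpr hne), one_smul]
            conv_lhs => rw [← h3]
            rw [hghom _ (norm_nonneg θ)]
          rw [h2]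
          have h4 := norm_nonneg θ
          nlinarith
      have hcardpos : (0:ℝ) < S.card := by
        exact_mod_cast Finset.card_pos.mpr ⟨T₀, hT₀⟩
      set R : ℝ := (S.card : ℝ) * (f 0 + 1) / δ with hRdef
      have hRnn : 0 ≤ R := by
        have := hf0 0
        positivity
      set K2 : Set (E → ℝ) := (W : Set (E → ℝ)) ∩ Metric.closedBall 0 R with hK2def
      have hK2compact : IsCompact K2 :=
        Metric.isCompact_of_isClosed_isBounded
          (W.closed_of_finiteDimensional.inter Metric.isClosed_closedBall)
          (Metric.isBounded_closedBall.subset Set.inter_subset_right)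
      have hK2ne : K2.Nonempty :=
        ⟨0, W.zero_mem, by rw [Metric.mem_closedBall, dist_self]; exact hRnn⟩
      obtain ⟨θs, hθsK, hθsmin⟩ := hK2compact.exists_isMinOn hK2ne hfcont.continuousOn
      refine ⟨θs, hθsK.1, fun θ hθ => ?_⟩
      by_cases hθK : θ ∈ K2
      · exact isMinOn_iff.mp hθsmin _ hθK
      · have hout : R < ‖θ‖ := by
          by_contra hcon
          push_neg at hcon
          exact hθK ⟨hθ, by rwa [Metric.mem_closedBall, dist_zero_right]⟩
        have h1 : δ * ‖θ‖ ≤ g θ := hglb θ hθ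
        have h2 : g θ ≤ (S.card : ℝ) * f θ := hfg θ
        have h3 : (S.card : ℝ) * (f 0 + 1) = δ * R := by
          rw [hRdef]
          field_simp
        have hδR : δ * R < δ * ‖θ‖ := (mul_lt_mul_iff_right₀ hδpos).mpr hout
        have h4 : f 0 < f θ := by
          have h6 : (S.card : ℝ) * (f 0 + 1) < (S.card : ℝ) * f θ := by linarith
          have h7 := lt_of_mul_lt_mul_left h6 hcardpos.le
          linarith
        have h5 : f θs ≤ f 0 :=
          isMinOn_iff.mp hθsmin 0 ⟨W.zero_mem, by rw [Metric.mem_closedBall, dist_self]; exact hRnn⟩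
        linarith
  obtain ⟨θs, hθsW, hθsmin⟩ := hmin
  refine ⟨θs, ?_⟩
  -- first-order condition: for every direction d ∈ W the derivative vanishes
  have hderiv : ∀ d : E → ℝ, d ∈ W →
      ∑ T ∈ S, Real.exp (ell T θs) * ell T d = Z θs * ∑ T ∈ S, μ T * ell T d := by
    intro d hd
    set φ : ℝ → ℝ := fun t => f (θs + t • d) with hφdef
    have hφmin : IsLocalMin φ 0 := by
      refine Filter.Eventually.of_forall fun t => ?_
      have hmem : θs + t • d ∈ W := W.add_mem hθsW (W.smul_mem _ hd)
      have h2 := hθsmin _ hmem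
      simpa [hφdef] using h2
    set D : ℝ := (∑ T ∈ S, Real.exp (ell T θs) * ell T d) / Z θs
      - ∑ T ∈ S, μ T * ell T d with hDdef
    have hφD : HasDerivAt φ D 0 := by
      have hφeq : φ = fun t => Real.log (∑ T ∈ S, Real.exp (ell T θs + t * ell T d))
          - (L θs + t * ∑ T ∈ S, μ T * ell T d) := by
        funext t
        simp only [hφdef, hfdef, hZdef, hLdef, ell_add_smul]
        congr 1
        rw [Finset.mul_sum, ← Finset.sum_add_distrib]
        exact Finset.sum_congr rfl fun T _ => by ring
      rw [hφeq]
      have h1 : ∀ T ∈ S, HasDerivAt (fun t : ℝ => Real.exp (ell T θs + t * ell T d))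
          (Real.exp (ell T θs + 0 * ell T d) * ell T d) 0 := by
        intro T _
        exact ((hasDerivAt_mul_const (ell T d)).const_add (ell T θs)).exp
      have h2 : HasDerivAt (fun t : ℝ => ∑ T ∈ S, Real.exp (ell T θs + t * ell T d))
          (∑ T ∈ S, Real.exp (ell T θs + 0 * ell T d) * ell T d) 0 := HasDerivAt.fun_sum h1
      have hne : (∑ T ∈ S, Real.exp (ell T θs + 0 * ell T d)) ≠ 0 := by
        have hp : ∀ T ∈ S, (0:ℝ) < Real.exp (ell T θs + 0 * ell T d) :=
          fun T _ => Real.exp_pos _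
        exact (Finset.sum_pos hp ⟨T₀, hT₀⟩).ne'
      have h3 := h2.log hne
      have h4 : HasDerivAt (fun t : ℝ => L θs + t * ∑ T ∈ S, μ T * ell T d)
          (∑ T ∈ S, μ T * ell T d) 0 :=
        (hasDerivAt_mul_const _).const_add _
      have h5 := h3.sub h4
      refine h5.congr_deriv ?_
      rw [hDdef, hZdef]
      simp only [zero_mul, add_zero]
    have hD0 : D = 0 := hφmin.hasDerivAt_eq_zero hφD
    rw [hDdef, sub_eq_zero, div_eq_iff (hZpos θs).ne'] at hD0
    rw [hD0]; ring
  -- swap-order helper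
  have hA : ∀ (d : E → ℝ) (w : Finset E → ℝ),
      ∑ e : E, d e * ∑ T ∈ S, w T * iv T e = ∑ T ∈ S, w T * ell T d := by
    intro d w
    simp_rw [Finset.mul_sum]
    rw [Finset.sum_comm]
    refine Finset.sum_congr rfl fun T _ => ?_
    rw [← dot_iv d T, Finset.mul_sum]
    exact Finset.sum_congr rfl fun e _ => by ring
  -- the discrepancy vector lies in W and is orthogonal to W, hence vanishes
  set z : E → ℝ := fun e => (∑ T ∈ S, Real.exp (ell T θs) * iv T e)
      - Z θs * ∑ T ∈ S, μ T * iv T e with hzdef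
  have hzW : z ∈ W := by
    have hzeq : z = ∑ T ∈ S, (Real.exp (ell T θs) - Z θs * μ T) • (iv T - iv T₀) := by
      funext e
      simp only [hzdef, Finset.sum_apply, Pi.smul_apply, Pi.sub_apply, smul_eq_mul]
      have hc1 : ∑ T ∈ S, (Real.exp (ell T θs) - Z θs * μ T) = 0 := by
        rw [Finset.sum_sub_distrib, ← Finset.mul_sum, hsum, mul_one, hZdef]
        ring
      have hexp : ∑ T ∈ S, (Real.exp (ell T θs) - Z θs * μ T) * (iv T e - iv T₀ e)
          = ∑ T ∈ S, (Real.exp (ell T θs) - Z θs * μ T) * iv T e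
            - (∑ T ∈ S, (Real.exp (ell T θs) - Z θs * μ T)) * iv T₀ e := by
        rw [Finset.sum_mul, ← Finset.sum_sub_distrib]
        exact Finset.sum_congr rfl fun T _ => by ring
      rw [hexp, hc1, zero_mul, sub_zero]
      have hsplit : ∑ T ∈ S, (Real.exp (ell T θs) - Z θs * μ T) * iv T e
          = (∑ T ∈ S, Real.exp (ell T θs) * iv T e) - Z θs * ∑ T ∈ S, μ T * iv T e := by
        rw [Finset.mul_sum, ← Finset.sum_sub_distrib]
        exact Finset.sum_congr rfl fun T _ => by ring
      rw [hsplit]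
    rw [hzeq]
    exact Submodule.sum_mem W fun T hT =>
      Submodule.smul_mem W _ (Submodule.subset_span ⟨T, hT, rfl⟩)
  have hzorth : ∑ e : E, z e * z e = 0 := by
    have hswap : ∑ e : E, z e * z e
        = (∑ e : E, z e * ∑ T ∈ S, Real.exp (ell T θs) * iv T e)
          - ∑ e : E, z e * (Z θs * ∑ T ∈ S, μ T * iv T e) := by
      rw [← Finset.sum_sub_distrib]
      refine Finset.sum_congr rfl fun e _ => ?_
      have hze : z e = (∑ T ∈ S, Real.exp (ell T θs) * iv T e)
          - Z θs * ∑ T ∈ S, μ T * iv T e := by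
        simp only [hzdef]
      calc z e * z e
          = z e * ((∑ T ∈ S, Real.exp (ell T θs) * iv T e)
              - Z θs * ∑ T ∈ S, μ T * iv T e) := by rw [← hze]
        _ = _ := by ring
    have h2 : ∑ e : E, z e * (Z θs * ∑ T ∈ S, μ T * iv T e)
        = Z θs * ∑ T ∈ S, μ T * ell T z := by
      rw [← hA z μ, Finset.mul_sum]
      exact Finset.sum_congr rfl fun e _ => by ring
    rw [hswap, hA z (fun T => Real.exp (ell T θs)), h2, hderiv z hzW, sub_self]
  have hz0 : ∀ e : E, z e = 0 := by
    intro e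
    have hnn : ∀ e' : E, e' ∈ Finset.univ → (0:ℝ) ≤ z e' * z e' :=
      fun e' _ => mul_self_nonneg _
    exact mul_self_eq_zero.mp
      ((Finset.sum_eq_zero_iff_of_nonneg hnn).mp hzorth e (Finset.mem_univ e))
  intro e
  have hze2 : (∑ T ∈ S, Real.exp (ell T θs) * iv T e)
      = Z θs * ∑ T ∈ S, μ T * iv T e := by
    have h := hz0 e
    simp only [hzdef] at h
    linarith
  rw [Finset.sum_filter]
  calc ∑ T ∈ S, (if e ∈ T then Real.exp (∑ t ∈ T, θs t) else 0)
      = ∑ T ∈ S, Real.exp (ell T θs) * iv T e := by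
        refine Finset.sum_congr rfl fun T _ => ?_
        simp only [iv, ell, mul_ite, mul_one, mul_zero]
    _ = Z θs * ∑ T ∈ S, μ T * iv T e := hze2
    _ = (∑ T ∈ S, Real.exp (∑ t ∈ T, θs t)) * ∑ T ∈ S, μ T * (if e ∈ T then 1 else 0) := by
        simp only [hZdef, ell, iv]


end MeanMap

end RCurv

open RCurv in
/-- A graph is resistance nonnegative iff there is a positive probability distribution on its
spanning trees under which every vertex has expected degree at most `2`. -/
theorem isRN_iff_exists_distribution {V : Type*} [Fintype V] [DecidableEq V]
    (G : SimpleGraph V) (hG : G.Connected) :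
    IsRN G ↔
      ∃ μ : Finset (Sym2 V) → ℝ,
        (∀ T ∈ spanningTrees G, 0 < μ T) ∧
        (∑ T ∈ spanningTrees G, μ T = 1) ∧
        ∀ v : V, ∑ T ∈ spanningTrees G, μ T * ((T.filter fun e => v ∈ e).card : ℝ) ≤ 2 := by
  constructor
  · rintro ⟨c, hc, hcurv⟩
    obtain ⟨T₁, hT₁⟩ := spanningTrees_nonempty G hG
    have hsubT : ∀ T ∈ spanningTrees G, (T : Set (Sym2 V)) ⊆ G.edgeSet := fun T hT =>
      (Finset.mem_filter.mp hT).2.1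
    have hprod : ∀ T ∈ spanningTrees G, 0 < ∏ t ∈ T, c t := fun T hT =>
      Finset.prod_pos fun t ht => hc t (hsubT T hT ht)
    have hZpos : 0 < ∑ T ∈ spanningTrees G, ∏ t ∈ T, c t :=
      Finset.sum_pos hprod ⟨T₁, hT₁⟩
    refine ⟨fun T => (∏ t ∈ T, c t) / (∑ T ∈ spanningTrees G, ∏ t ∈ T, c t),
      fun T hT => div_pos (hprod T hT) hZpos, ?_, ?_⟩
    · rw [← Finset.sum_div, div_self hZpos.ne']
    · intro v
      have hrel : ∑ T ∈ spanningTrees G,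
            (∏ t ∈ T, c t) / (∑ T ∈ spanningTrees G, ∏ t ∈ T, c t)
              * ((T.filter fun e => v ∈ e).card : ℝ)
          = ∑ u ∈ G.neighborFinset v, relRes G c s(u, v) := by
        calc ∑ T ∈ spanningTrees G,
              (∏ t ∈ T, c t) / (∑ T ∈ spanningTrees G, ∏ t ∈ T, c t)
                * ((T.filter fun e => v ∈ e).card : ℝ)
            = (∑ T ∈ spanningTrees G,
                (∏ t ∈ T, c t) * ((T.filter fun e => v ∈ e).card : ℝ))
                / (∑ T ∈ spanningTrees G, ∏ t ∈ T, c t) := by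
              rw [Finset.sum_div]
              exact Finset.sum_congr rfl fun T _ => by rw [div_mul_eq_mul_div]
          _ = (∑ u ∈ G.neighborFinset v,
                ∑ T ∈ (spanningTrees G).filter (fun T => s(u, v) ∈ T), ∏ t ∈ T, c t)
                / (∑ T ∈ spanningTrees G, ∏ t ∈ T, c t) := by
              rw [sum_deg_eq]
          _ = ∑ u ∈ G.neighborFinset v, relRes G c s(u, v) := by
              rw [Finset.sum_div]
              exact Finset.sum_congr rfl fun u _ => by simp only [relRes]
      rw [hrel]
      have hcv := hcurv v
      simp only [curv] at hcv
      linarith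
  · rintro ⟨μ, hμpos, hμsum, hdeg⟩
    obtain ⟨θ, hθ⟩ := exists_good_weights (spanningTrees G) μ hμpos hμsum
    refine ⟨fun e => Real.exp (θ e), fun e _ => Real.exp_pos _, fun v => ?_⟩
    have hconv : ∀ A : Finset (Finset (Sym2 V)),
        ∑ T ∈ A, ∏ t ∈ T, Real.exp (θ t) = ∑ T ∈ A, Real.exp (∑ t ∈ T, θ t) :=
      fun A => Finset.sum_congr rfl fun T _ => (Real.exp_sum T θ).symm
    have hZpos : 0 < ∑ T ∈ spanningTrees G, Real.exp (∑ t ∈ T, θ t) := by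
      obtain ⟨T₁, hT₁⟩ := spanningTrees_nonempty G hG
      exact Finset.sum_pos (fun T _ => Real.exp_pos _) ⟨T₁, hT₁⟩
    have hrel : ∀ e : Sym2 V, relRes G (fun e => Real.exp (θ e)) e
        = ∑ T ∈ spanningTrees G, μ T * (if e ∈ T then 1 else 0) := by
      intro e
      simp only [relRes]
      rw [hconv, hconv, hθ e, mul_comm, mul_div_assoc, div_self hZpos.ne', mul_one]
    have hsum2 : ∑ u ∈ G.neighborFinset v, relRes G (fun e => Real.exp (θ e)) s(u, v)
        = ∑ T ∈ spanningTrees G, μ T * ((T.filter fun e => v ∈ e).card : ℝ) := by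
      rw [sum_deg_eq G μ v]
      refine Finset.sum_congr rfl fun u _ => ?_
      rw [hrel s(u, v), Finset.sum_filter]
      exact Finset.sum_congr rfl fun T _ => by
        by_cases h : s(u, v) ∈ T <;> simp [h]
    have hd := hdeg v
    rw [← hsum2] at hd
    simp only [curv]
    linarith
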